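/- Let X be an order continuous Banach lattice, C ⊆ X a solid set, and A ⊆ C₊ a maximal set of pairwise disjoint positive vectors in C. Then C is contained in the closed ideal generated by A. -/

import Mathlib

/-!
Fix `x ∈ C` and put `u = |x| ∈ C`. If `w` is an upper bound of `I(A) ∩ [0, u]`, then
`u ⊓ n • a ≤ w` for all `a ∈ A` and `n`, so by the Archimedean property `(u - w)⁺ = u - u ⊓ w`
is disjoint from `A`; it is a positive element of `C`, so maximality of `A` forces it to vanish.
Hence `u` is the supremum of the upward directed set `I(A) ∩ [0, u]`, order continuity puts `u`
in its closure, hence in `I(A)`, and `x ∈ I(A)` because `I(A)` is solid.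
-/

open Filter Topology Set

section Defs

variable {E : Type*} [NormedAddCommGroup E] [NormedSpace ℝ E]

/-- A set is weakly compact if it is compact in the weak topology. -/
def WeaklyCompact (K : Set E) : Prop := IsCompact (toWeakSpace ℝ E '' K)

/-- A set is weakly precompact if every sequence in it has a weakly Cauchy subsequence. -/
def WeaklyPrecompact (K : Set E) : Prop :=
  ∀ x : ℕ → E, (∀ n, x n ∈ K) → ∃ φ : ℕ → ℕ, StrictMono φ ∧
    ∀ f : E →L[ℝ] ℝ, ∃ l : ℝ, Tendsto (fun n => f (x (φ n))) atTop (𝓝 l)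

end Defs

section LatDefs

variable {E : Type*} [NormedAddCommGroup E] [Lattice E] [NormedSpace ℝ E]

/-- A closed sublattice: a closed linear subspace closed under `⊔` and `⊓`. -/
def IsClosedSublattice (S : Set E) : Prop :=
  IsClosed S ∧ (0 : E) ∈ S ∧ (∀ x ∈ S, ∀ y ∈ S, x + y ∈ S) ∧
    (∀ c : ℝ, ∀ x ∈ S, c • x ∈ S) ∧
    (∀ x ∈ S, ∀ y ∈ S, x ⊔ y ∈ S) ∧ (∀ x ∈ S, ∀ y ∈ S, x ⊓ y ∈ S)

/-- `L(A)`: the smallest closed sublattice containing `A`. -/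
def sublatticeGen (A : Set E) : Set E := ⋂₀ {S | IsClosedSublattice S ∧ A ⊆ S}

/-- The solid hull of a set. -/
def solidHull (A : Set E) : Set E := ⋃ x ∈ A, Set.Icc (-|x|) |x|

/-- A closed ideal: a closed linear subspace which is solid. -/
def IsClosedIdeal (S : Set E) : Prop :=
  IsClosed S ∧ (0 : E) ∈ S ∧ (∀ x ∈ S, ∀ y ∈ S, x + y ∈ S) ∧
    (∀ c : ℝ, ∀ x ∈ S, c • x ∈ S) ∧
    (∀ x : E, ∀ y ∈ S, |x| ≤ |y| → x ∈ S)

/-- `I(A)`: the smallest closed ideal containing `A`. -/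
def idealGen (A : Set E) : Set E := ⋂₀ {S | IsClosedIdeal S ∧ A ⊆ S}

/-- A band: a closed ideal closed under existing suprema. -/
def IsBand (S : Set E) : Prop :=
  IsClosedIdeal S ∧ ∀ D ⊆ S, ∀ x : E, IsLUB D x → x ∈ S

/-- `B(A)`: the smallest band containing `A`. -/
def bandGen (A : Set E) : Set E := ⋂₀ {S | IsBand S ∧ A ⊆ S}

/-- Disjoint complement of a set. -/
def disjComplement (A : Set E) : Set E := {x : E | ∀ y ∈ A, |x| ⊓ |y| = 0}

end LatDefs

/-- Order continuity of the norm: every downward directed set with infimum `0`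
has norms converging to `0` along the order. -/
def OrderContinuousBL (E : Type*) [NormedAddCommGroup E] [Lattice E] : Prop :=
  ∀ D : Set E, D.Nonempty → DirectedOn (· ≥ ·) D → IsGLB D 0 →
    ∀ ε > 0, ∃ d ∈ D, ∀ e ∈ D, e ≤ d → ‖e‖ < ε

/-- Density character of a topological space. -/
noncomputable def densChar (T : Type*) [TopologicalSpace T] : Cardinal :=
  sInf {c : Cardinal | ∃ s : Set T, Dense s ∧ Cardinal.mk s = c}

section IdealGen

variable {E : Type*} [NormedAddCommGroup E] [Lattice E] [NormedSpace ℝ E]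

theorem isClosedIdeal_idealGen (A : Set E) : IsClosedIdeal (idealGen A) :=
  ⟨isClosed_sInter fun _ hS => hS.1.1, fun _ hS => hS.1.2.1,
    fun _ hx _ hy S hS => hS.1.2.2.1 _ (hx S hS) _ (hy S hS),
    fun c _ hx S hS => hS.1.2.2.2.1 c _ (hx S hS),
    fun x _ hy hxy S hS => hS.1.2.2.2.2 x _ (hy S hS) hxy⟩

theorem subset_idealGen (A : Set E) : A ⊆ idealGen A := fun _ ha _ hS => hS.2 ha

end IdealGen

namespace IsClosedIdeal

variable {E : Type*} [NormedAddCommGroup E] [Lattice E] [NormedSpace ℝ E] {S : Set E}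

theorem nsmul_mem (hS : IsClosedIdeal S) {x : E} (hx : x ∈ S) (n : ℕ) : n • x ∈ S := by
  simpa only [Nat.cast_smul_eq_nsmul] using hS.2.2.2.1 n x hx

variable [IsOrderedAddMonoid E]

theorem inf_mem_of_nonneg (hS : IsClosedIdeal S) {x y : E} (hx : 0 ≤ x) (hy : 0 ≤ y)
    (hyS : y ∈ S) : x ⊓ y ∈ S :=
  hS.2.2.2.2 _ y hyS <| by
    rw [abs_of_nonneg (le_inf hx hy), abs_of_nonneg hy]
    exact inf_le_right

theorem sup_mem_of_nonneg (hS : IsClosedIdeal S) {x y : E} (hx : 0 ≤ x) (hy : 0 ≤ y)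
    (hxS : x ∈ S) (hyS : y ∈ S) : x ⊔ y ∈ S :=
  hS.2.2.2.2 _ (x + y) (hS.2.2.1 x hxS y hyS) <| by
    rw [abs_of_nonneg (le_sup_of_le_left hx), abs_of_nonneg (add_nonneg hx hy)]
    exact sup_le (le_add_of_nonneg_right hy) (le_add_of_nonneg_left hx)

theorem directedOn_inter_Icc (hS : IsClosedIdeal S) (u : E) :
    DirectedOn (· ≤ ·) (S ∩ Icc 0 u) :=
  fun x ⟨hxS, hx0, hxu⟩ y ⟨hyS, hy0, hyu⟩ =>
    ⟨x ⊔ y, ⟨hS.sup_mem_of_nonneg hx0 hy0 hxS hyS, le_sup_of_le_left hx0, sup_le hxu hyu⟩,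
      le_sup_left, le_sup_right⟩

end IsClosedIdeal

section LatticeGroup

variable {E : Type*} [AddCommGroup E] [Lattice E] [IsOrderedAddMonoid E]

theorem nsmul_inf_le_inf_nsmul {u w a : E} (hu : 0 ≤ u) (h : ∀ n : ℕ, u ⊓ n • a ≤ w) (n : ℕ) :
    n • ((u - u ⊓ w) ⊓ a) ≤ u ⊓ n • a := by
  induction n with
  | zero => simp [inf_of_le_right hu]
  | succ n ih =>
    set c := (u - u ⊓ w) ⊓ a
    have hc : c ≤ u - u ⊓ n • a :=
      inf_le_left.trans (sub_le_sub_left (le_inf inf_le_left (h n)) u)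
    rw [succ_nsmul, succ_nsmul]
    refine le_inf ?_ (add_le_add (ih.trans inf_le_right) inf_le_right)
    calc n • c + c ≤ u ⊓ n • a + (u - u ⊓ n • a) := add_le_add ih hc
      _ = u := add_sub_cancel _ _

end LatticeGroup

theorem eq_zero_of_forall_inf_eq_zero_of_maximal {E : Type*} [Lattice E] [Zero E] {C A : Set E}
    (hAC : A ⊆ C) (hApos : ∀ x ∈ A, 0 ≤ x)
    (hAdisj : ∀ x ∈ A, ∀ y ∈ A, x ≠ y → x ⊓ y = 0)
    (hAmax : ∀ B : Set E, A ⊆ B → B ⊆ C → (∀ x ∈ B, 0 ≤ x) →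
      (∀ x ∈ B, ∀ y ∈ B, x ≠ y → x ⊓ y = 0) → B = A)
    {z : E} (hzC : z ∈ C) (hz : 0 ≤ z) (hzA : ∀ a ∈ A, z ⊓ a = 0) : z = 0 := by
  have hins : insert z A = A := by
    refine hAmax _ (subset_insert z A) (insert_subset hzC hAC) ?_ ?_
    · rintro x (rfl | hx)
      exacts [hz, hApos x hx]
    · rintro x (rfl | hx) y (rfl | hy) hxy
      exacts [absurd rfl hxy, hzA y hy, inf_comm x _ ▸ hzA x hx, hAdisj x hx y hy hxy]
  simpa only [inf_idem] using hzA z (hins ▸ mem_insert z A)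

section SolidNorm

variable {E : Type*} [NormedAddCommGroup E] [Lattice E] [HasSolidNorm E] [IsOrderedAddMonoid E]
  [NormedSpace ℝ E]

theorem eq_zero_of_nonneg_of_forall_nsmul_le {c u : E} (hc : 0 ≤ c) (h : ∀ n : ℕ, n • c ≤ u) :
    c = 0 := by
  have hbound : ∀ n : ℕ, n * ‖c‖ ≤ ‖u‖ := fun n => by
    have hnc : 0 ≤ n • c := nsmul_nonneg hc n
    rw [← nsmul_eq_mul, ← RCLike.norm_nsmul ℝ]
    exact norm_le_norm_of_abs_le_abs <| by
      rw [abs_of_nonneg hnc]; exact (h n).trans (le_abs_self u)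
  by_contra hne
  obtain ⟨n, hn⟩ := exists_nat_gt (‖u‖ / ‖c‖)
  rw [div_lt_iff₀ (norm_pos_iff.mpr hne)] at hn
  linarith [hbound n]

theorem inf_eq_zero_of_forall_inf_nsmul_le {u w a : E} (hu : 0 ≤ u) (ha : 0 ≤ a)
    (h : ∀ n : ℕ, u ⊓ n • a ≤ w) : (u - u ⊓ w) ⊓ a = 0 :=
  eq_zero_of_nonneg_of_forall_nsmul_le (le_inf (sub_nonneg.mpr inf_le_left) ha)
    fun n => (nsmul_inf_le_inf_nsmul hu h n).trans inf_le_left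

theorem isLUB_idealGen_inter_Icc_of_maximal {C A : Set E}
    (hCsolid : ∀ x y : E, y ∈ C → |x| ≤ |y| → x ∈ C)
    (hAC : A ⊆ C) (hApos : ∀ x ∈ A, 0 ≤ x)
    (hAdisj : ∀ x ∈ A, ∀ y ∈ A, x ≠ y → x ⊓ y = 0)
    (hAmax : ∀ B : Set E, A ⊆ B → B ⊆ C → (∀ x ∈ B, 0 ≤ x) →
      (∀ x ∈ B, ∀ y ∈ B, x ≠ y → x ⊓ y = 0) → B = A)
    {u : E} (huC : u ∈ C) (hu : 0 ≤ u) : IsLUB (idealGen A ∩ Icc 0 u) u := by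
  refine ⟨fun v hv => hv.2.2, fun w hw => ?_⟩
  have hI := isClosedIdeal_idealGen A
  have hw0 : 0 ≤ w := hw ⟨hI.2.1, le_rfl, hu⟩
  have hbelow : ∀ a ∈ A, ∀ n : ℕ, u ⊓ n • a ≤ w := fun a ha n =>
    have hna : 0 ≤ n • a := nsmul_nonneg (hApos a ha) n
    hw ⟨hI.inf_mem_of_nonneg hu hna (hI.nsmul_mem (subset_idealGen A ha) n),
      le_inf hu hna, inf_le_left⟩
  have hz0 : 0 ≤ u - u ⊓ w := sub_nonneg.mpr inf_le_left
  have hzC : u - u ⊓ w ∈ C := hCsolid _ u huC <| by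
    rw [abs_of_nonneg hz0, abs_of_nonneg hu]
    exact sub_le_self u (le_inf hu hw0)
  have hz : u - u ⊓ w = 0 :=
    eq_zero_of_forall_inf_eq_zero_of_maximal hAC hApos hAdisj hAmax hzC hz0 fun a ha =>
      inf_eq_zero_of_forall_inf_nsmul_le hu (hApos a ha) (hbelow a ha)
  exact (sub_eq_zero.mp hz).trans_le inf_le_right

end SolidNorm

theorem OrderContinuousBL.mem_closure_of_isLUB {E : Type*} [NormedAddCommGroup E] [Lattice E]
    [IsOrderedAddMonoid E] (hE : OrderContinuousBL E) {D : Set E} {u : E} (hD : D.Nonempty)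
    (hdir : DirectedOn (· ≤ ·) D) (hu : IsLUB D u) : u ∈ closure D := by
  have hglb : IsGLB ((u - ·) '' D) 0 := by
    refine ⟨?_, fun b hb => ?_⟩
    · rintro _ ⟨v, hv, rfl⟩
      exact sub_nonneg.mpr (hu.1 hv)
    · have : u ≤ u - b := hu.2 fun v hv => le_sub_comm.mp (hb ⟨v, hv, rfl⟩)
      exact (le_sub_self_iff u).mp this
  refine Metric.mem_closure_iff.mpr fun ε hε => ?_
  obtain ⟨_, ⟨v, hv, rfl⟩, hsmall⟩ := hE _ (hD.image _)
    (hdir.mono_comp fun _ _ h => sub_le_sub_left h u) hglb ε hε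
  exact ⟨v, hv, by rw [dist_eq_norm]; exact hsmall _ ⟨v, hv, rfl⟩ le_rfl⟩

theorem solid_subset_idealGen_of_maximal_disjoint_general
    {X : Type*} [NormedAddCommGroup X] [Lattice X] [HasSolidNorm X] [IsOrderedAddMonoid X]
    [NormedSpace ℝ X]
    (hX : OrderContinuousBL X)
    (C A : Set X)
    (hCsolid : ∀ x y : X, y ∈ C → |x| ≤ |y| → x ∈ C)
    (hAC : A ⊆ C) (hApos : ∀ x ∈ A, 0 ≤ x)
    (hAdisj : ∀ x ∈ A, ∀ y ∈ A, x ≠ y → x ⊓ y = 0)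
    (hAmax : ∀ B : Set X, A ⊆ B → B ⊆ C → (∀ x ∈ B, 0 ≤ x) →
      (∀ x ∈ B, ∀ y ∈ B, x ≠ y → x ⊓ y = 0) → B = A) :
    C ⊆ idealGen A := by
  intro x hx
  have hI := isClosedIdeal_idealGen A
  have habsC : |x| ∈ C := hCsolid |x| x hx (abs_abs x).le
  have hlub := isLUB_idealGen_inter_Icc_of_maximal hCsolid hAC hApos hAdisj hAmax habsC
    (abs_nonneg x)
  have hclosure : |x| ∈ closure (idealGen A ∩ Icc 0 |x|) :=
    hX.mem_closure_of_isLUB ⟨0, hI.2.1, le_rfl, abs_nonneg x⟩ (hI.directedOn_inter_Icc |x|) hlub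
  have habsI : |x| ∈ idealGen A := closure_minimal inter_subset_left hI.1 hclosure
  exact hI.2.2.2.2 x |x| habsI (abs_abs x).ge

/-- in an order continuous Banach lattice, a solid set C is contained
in the closed ideal generated by any maximal pairwise disjoint subset of C₊. -/
theorem solid_subset_idealGen_of_maximal_disjoint
    {X : Type*} [NormedAddCommGroup X] [Lattice X] [HasSolidNorm X] [IsOrderedAddMonoid X]
    [NormedSpace ℝ X] [CompleteSpace X]
    (hX : OrderContinuousBL X)
    (C A : Set X)
    (hCsolid : ∀ x y : X, y ∈ C → |x| ≤ |y| → x ∈ C)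
    (hAC : A ⊆ C) (hApos : ∀ x ∈ A, 0 ≤ x)
    (hAdisj : ∀ x ∈ A, ∀ y ∈ A, x ≠ y → x ⊓ y = 0)
    (hAmax : ∀ B : Set X, A ⊆ B → B ⊆ C → (∀ x ∈ B, 0 ≤ x) →
      (∀ x ∈ B, ∀ y ∈ B, x ≠ y → x ⊓ y = 0) → B = A) :
    C ⊆ idealGen A :=
  solid_subset_idealGen_of_maximal_disjoint_general hX C A hCsolid hAC hApos hAdisj hAmax
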